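/- Assume m ≥ n ≥ 20, c ≥ 1, and b(q) ≥ s(q) for all q ∈ (0,1). Fix quantiles 1 > q₁ ≥ q₂ ≥ … ≥ q_N > 0. Then STR(q,π) ≥ OPT(q,π) for every valid assignment π that is not in E₂. -/

import Mathlib

open MeasureTheory Finset

/-- The k-th smallest element (0-based) of a multiset of reals, or 0 if out of range. -/
noncomputable def ordAsc (M : Multiset ℝ) (k : ℕ) : ℝ :=
  (M.sort (· ≤ ·)).getD k 0

/-- The k-th largest element (0-based) of a multiset of reals, or 0 if out of range. -/
noncomputable def ordDesc (M : Multiset ℝ) (k : ℕ) : ℝ :=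
  (M.sort (· ≤ ·)).reverse.getD k 0

/-- The optimal trade size: the largest `r ≤ min(#buyers, #sellers)` such that the
`r`-th highest buyer value is at least the `r`-th lowest seller cost (`r = 0` if none). -/
noncomputable def tradeSize (B S : Multiset ℝ) : ℕ :=
  Nat.findGreatest (fun r => 0 < r → ordAsc S (r - 1) ≤ ordDesc B (r - 1))
    (min (Multiset.card B) (Multiset.card S))

/-- The first-best gains from trade: `∑_{i=1}^r (b⁽ⁱ⁾ - s⁽ⁱ⁾)` where `r` is the optimal
trade size. -/
noncomputable def optGFT (B S : Multiset ℝ) : ℝ :=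
  ∑ i ∈ Finset.range (tradeSize B S), (ordDesc B i - ordAsc S i)

/-- The gains from trade of the Seller Trade Reduction mechanism: equals the first-best
GFT if `r = #sellers` or `b⁽ʳ⁾ ≥ s⁽ʳ⁺¹⁾`, and `∑_{i=1}^{r-1} (b⁽ⁱ⁾ - s⁽ⁱ⁾)` otherwise. -/
noncomputable def strGFT (B S : Multiset ℝ) : ℝ :=
  if tradeSize B S = Multiset.card S ∨
      (0 < tradeSize B S ∧ ordAsc S (tradeSize B S) ≤ ordDesc B (tradeSize B S - 1))
  then optGFT B S
  else ∑ i ∈ Finset.range (tradeSize B S - 1), (ordDesc B i - ordAsc S i)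


/-- Labels for agents: old buyer, new buyer, old seller, new seller. -/
inductive Label : Type
  | BO | BN | SO | SN
deriving DecidableEq

instance : Fintype Label where
  elems := {.BO, .BN, .SO, .SN}
  complete := by intro x; cases x <;> simp

/-- Total number of agents: `m` old buyers, `n` old sellers, `c` new buyers and `c` new
sellers. -/
def NN (m n c : ℕ) : ℕ := m + n + 2 * c

/-- The set of indices carrying a given label under the assignment `π`. -/
def labelSet (m n c : ℕ) (L : Label) (π : Fin (NN m n c) → Label) :
    Finset (Fin (NN m n c)) :=
  Finset.univ.filter (fun i => π i = L)

/-- Valid assignments: exactly `m` old buyers, `c` new buyers, `n` old sellers and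
`c` new sellers. -/
def validAssignments (m n c : ℕ) : Finset (Fin (NN m n c) → Label) :=
  Finset.univ.filter (fun π =>
    (labelSet m n c .BO π).card = m ∧ (labelSet m n c .BN π).card = c ∧
    (labelSet m n c .SO π).card = n ∧ (labelSet m n c .SN π).card = c)

/-- `p = ⌈n/10⌉`. -/
def pVal (n : ℕ) : ℕ := (n + 9) / 10

/-- `I₁`: the indices of the top `p` quantiles (1-based indices `{1,…,p}`). -/
def I1 (m n c : ℕ) : Finset (Fin (NN m n c)) :=
  Finset.univ.filter (fun i => (i : ℕ) < pVal n)

/-- `I₂`: 1-based indices `{p+1,…,2p}`. -/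
def I2 (m n c : ℕ) : Finset (Fin (NN m n c)) :=
  Finset.univ.filter (fun i => pVal n ≤ (i : ℕ) ∧ (i : ℕ) < 2 * pVal n)

/-- `J₁`: 1-based indices `{N-p+1,…,N}`. -/
def J1 (m n c : ℕ) : Finset (Fin (NN m n c)) :=
  Finset.univ.filter (fun i => NN m n c - pVal n ≤ (i : ℕ))

/-- `J₂`: 1-based indices `{N-2p+1,…,N-p}`. -/
def J2 (m n c : ℕ) : Finset (Fin (NN m n c)) :=
  Finset.univ.filter (fun i =>
    NN m n c - 2 * pVal n ≤ (i : ℕ) ∧ (i : ℕ) < NN m n c - pVal n)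

/-- The good event `E₁`: at least 2 new buyers in `I₁`, at least 1 old buyer in `I₂`,
at least 2 new sellers in `J₁`, at least 1 old seller in `J₂`. -/
def E1 (m n c : ℕ) : Finset (Fin (NN m n c) → Label) :=
  (validAssignments m n c).filter (fun π =>
    2 ≤ (I1 m n c ∩ labelSet m n c .BN π).card ∧
    1 ≤ (I2 m n c ∩ labelSet m n c .BO π).card ∧
    2 ≤ (J1 m n c ∩ labelSet m n c .SN π).card ∧
    1 ≤ (J2 m n c ∩ labelSet m n c .SO π).card)

/-- The bad event `E₂`: `E₁` fails and all new sellers are among the top `2n + 2c`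
indices. -/
def E2 (m n c : ℕ) : Finset (Fin (NN m n c) → Label) :=
  (validAssignments m n c).filter (fun π =>
    π ∉ E1 m n c ∧ ∀ i ∈ labelSet m n c .SN π, (i : ℕ) < 2 * n + 2 * c)

/-- The probability of an event under a uniformly random valid assignment. -/
noncomputable def prOf (m n c : ℕ) (E : Finset (Fin (NN m n c) → Label)) : ℝ :=
  (E.card : ℝ) / (validAssignments m n c).card

/-- The GFT of the first-best allocation in the **original** market under quantile vector
`q`, assignment `π`, and quantile-to-value maps `b` (buyers) and `s` (sellers). -/
noncomputable def OPTq (m n c : ℕ) (q : Fin (NN m n c) → ℝ) (b s : ℝ → ℝ)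
    (π : Fin (NN m n c) → Label) : ℝ :=
  optGFT ((labelSet m n c .BO π).val.map (fun i => b (q i)))
         ((labelSet m n c .SO π).val.map (fun i => s (q i)))

/-- The GFT of the Seller Trade Reduction mechanism in the **augmented** market under
quantile vector `q`, assignment `π`, and quantile-to-value maps `b` and `s`. -/
noncomputable def STRq (m n c : ℕ) (q : Fin (NN m n c) → ℝ) (b s : ℝ → ℝ)
    (π : Fin (NN m n c) → Label) : ℝ :=
  strGFT ((labelSet m n c .BO π ∪ labelSet m n c .BN π).val.map (fun i => b (q i)))
         ((labelSet m n c .SO π ∪ labelSet m n c .SN π).val.map (fun i => s (q i)))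


/-!
Adding agents can only raise the `i`-th best buyer value and lower the `i`-th best seller
cost, so OPT of the original market is bounded by the first `t` augmented trades for every
`t` between the two trade sizes. STR forgoes at most its last trade, hence it beats OPT
whenever the augmented market trades strictly more, or STR forgoes nothing.

Off `E₂`, either `E₁` holds, and a new buyer among the top `p` quantiles together with a new
seller among the bottom `p` adds a trade; or some new seller has index at least `2n + 2c`,
so that more than `n` old buyers value above its cost, and this seller either trades or
becomes the price-setting seller that STR keeps.
-/

section OrderStatistics

lemma pred_getElem_iff_lt_countP {α : Type*} {R : α → α → Prop} {P : α → Prop}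
    [DecidablePred P] {L : List α} (hL : L.Pairwise R) (hP : ∀ ⦃a b⦄, R a b → P b → P a)
    {k : ℕ} (hk : k < L.length) : P L[k] ↔ k < L.countP P := by
  have hsplit : L = L.take k ++ L[k] :: L.drop (k + 1) := by simp
  have hA : (L.take k).length = k := by simp; omega
  generalize L.take k = A, L[k] = x, L.drop (k + 1) = C at hsplit hA
  subst hsplit hA
  simp only [List.pairwise_append, List.pairwise_cons, List.mem_cons] at hL
  obtain ⟨-, ⟨hxC, -⟩, hAx⟩ := hL
  simp only [List.countP_append, List.countP_cons]
  constructor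
  · intro hx
    have hAall : A.countP P = A.length :=
      List.countP_eq_length.mpr fun a ha => by simpa using hP (hAx a ha x (Or.inl rfl)) hx
    simp [hAall, hx]
  · intro hlt
    by_contra hx
    have hCnone : C.countP P = 0 :=
      List.countP_eq_zero.mpr fun c hc hPc => hx (hP (hxC c hc) (by simpa using hPc))
    have := A.countP_le_length (p := fun a => decide (P a))
    simp [hCnone, hx] at hlt
    omega

variable {M M' : Multiset ℝ} {k l : ℕ} {v : ℝ}

lemma ordAsc_pred_iff {P : ℝ → Prop} [DecidablePred P] (hP : ∀ ⦃a b⦄, a ≤ b → P b → P a)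
    (hk : k < Multiset.card M) : P (ordAsc M k) ↔ k < M.countP P := by
  have hkL : k < (M.sort (· ≤ ·)).length := by rwa [Multiset.length_sort]
  rw [ordAsc, List.getD_eq_getElem _ _ hkL, pred_getElem_iff_lt_countP (Multiset.pairwise_sort _ _)
    hP hkL, ← Multiset.coe_countP, Multiset.sort_eq]

lemma ordDesc_pred_iff {P : ℝ → Prop} [DecidablePred P] (hP : ∀ ⦃a b⦄, b ≤ a → P b → P a)
    (hk : k < Multiset.card M) : P (ordDesc M k) ↔ k < M.countP P := by
  have hkL : k < (M.sort (· ≤ ·)).reverse.length := by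
    rwa [List.length_reverse, Multiset.length_sort]
  rw [ordDesc, List.getD_eq_getElem _ _ hkL, pred_getElem_iff_lt_countP
    (List.pairwise_reverse.mpr (Multiset.pairwise_sort _ _)) hP hkL, List.countP_reverse,
    ← Multiset.coe_countP, Multiset.sort_eq]

lemma ordAsc_le_iff (hk : k < Multiset.card M) : ordAsc M k ≤ v ↔ k < M.countP (· ≤ v) :=
  ordAsc_pred_iff (fun _ _ hab hb => hab.trans hb) hk

lemma ordAsc_lt_iff (hk : k < Multiset.card M) : ordAsc M k < v ↔ k < M.countP (· < v) :=
  ordAsc_pred_iff (fun _ _ hab hb => hab.trans_lt hb) hk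

lemma le_ordDesc_iff (hk : k < Multiset.card M) : v ≤ ordDesc M k ↔ k < M.countP (v ≤ ·) :=
  ordDesc_pred_iff (fun _ _ hba hb => hb.trans hba) hk

lemma lt_ordDesc_iff (hk : k < Multiset.card M) : v < ordDesc M k ↔ k < M.countP (v < ·) :=
  ordDesc_pred_iff (fun _ _ hba hb => hb.trans_le hba) hk

lemma lt_card_of_lt_countP {P : ℝ → Prop} [DecidablePred P] (h : k < M.countP P) :
    k < Multiset.card M :=
  h.trans_le (Multiset.countP_le_card _ _)

lemma countP_mono_pred {P Q : ℝ → Prop} [DecidablePred P] [DecidablePred Q]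
    (h : ∀ x, P x → Q x) : M.countP P ≤ M.countP Q := by
  simp only [Multiset.countP_eq_card_filter]
  exact Multiset.card_le_card (Multiset.monotone_filter_right M h)

lemma ordAsc_mono (hkl : k ≤ l) (hl : l < Multiset.card M) : ordAsc M k ≤ ordAsc M l :=
  (ordAsc_le_iff (hkl.trans_lt hl)).mpr (hkl.trans_lt ((ordAsc_le_iff hl).mp le_rfl))

lemma ordDesc_anti (hkl : k ≤ l) (hl : l < Multiset.card M) : ordDesc M l ≤ ordDesc M k :=
  (le_ordDesc_iff (hkl.trans_lt hl)).mpr (hkl.trans_lt ((le_ordDesc_iff hl).mp le_rfl))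

lemma ordAsc_le_ordAsc_of_le (h : M ≤ M') (hk : k < Multiset.card M) :
    ordAsc M' k ≤ ordAsc M k :=
  have hlt := ((ordAsc_le_iff hk).mp le_rfl).trans_le (Multiset.countP_le_of_le _ h)
  (ordAsc_le_iff (lt_card_of_lt_countP hlt)).mpr hlt

lemma ordDesc_le_ordDesc_of_le (h : M ≤ M') (hk : k < Multiset.card M) :
    ordDesc M k ≤ ordDesc M' k :=
  have hlt := ((le_ordDesc_iff hk).mp le_rfl).trans_le (Multiset.countP_le_of_le _ h)
  (le_ordDesc_iff (lt_card_of_lt_countP hlt)).mpr hlt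

end OrderStatistics

section TradeSize

variable {B S B' S' : Multiset ℝ}

lemma tradeSize_le_card_left (B S : Multiset ℝ) : tradeSize B S ≤ Multiset.card B :=
  (Nat.findGreatest_le _).trans (min_le_left _ _)

lemma tradeSize_le_card_right (B S : Multiset ℝ) : tradeSize B S ≤ Multiset.card S :=
  (Nat.findGreatest_le _).trans (min_le_right _ _)

lemma ordAsc_le_ordDesc_pred_tradeSize (h : 0 < tradeSize B S) :
    ordAsc S (tradeSize B S - 1) ≤ ordDesc B (tradeSize B S - 1) :=
  Nat.findGreatest_spec (P := fun r => 0 < r → ordAsc S (r - 1) ≤ ordDesc B (r - 1))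
    (Nat.zero_le _) (fun h0 => absurd h0 (lt_irrefl 0)) h

lemma ordAsc_le_ordDesc_of_lt_tradeSize {i : ℕ} (hi : i < tradeSize B S) :
    ordAsc S i ≤ ordDesc B i := by
  have hS := tradeSize_le_card_right B S
  have hB := tradeSize_le_card_left B S
  calc ordAsc S i ≤ ordAsc S (tradeSize B S - 1) := ordAsc_mono (by omega) (by omega)
    _ ≤ ordDesc B (tradeSize B S - 1) := ordAsc_le_ordDesc_pred_tradeSize (by omega)
    _ ≤ ordDesc B i := ordDesc_anti (by omega) (by omega)

lemma lt_tradeSize_of_lt_countP {k : ℕ} {v : ℝ} (hB : k < B.countP (v ≤ ·))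
    (hS : k < S.countP (· ≤ v)) : k < tradeSize B S := by
  have hkB := lt_card_of_lt_countP hB
  have hkS := lt_card_of_lt_countP hS
  refine Nat.le_findGreatest (by omega) fun _ => ?_
  simpa using ((ordAsc_le_iff hkS).mpr hS).trans ((le_ordDesc_iff hkB).mpr hB)

lemma tradeSize_mono (hB : B ≤ B') (hS : S ≤ S') : tradeSize B S ≤ tradeSize B' S' := by
  set r := tradeSize B S
  rcases Nat.eq_zero_or_pos r with hr | hr
  · omega
  have hrB := tradeSize_le_card_left B S
  have hrS := tradeSize_le_card_right B S
  refine Nat.le_findGreatest ?_ fun _ => ?_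
  · have := Multiset.card_le_card hB
    have := Multiset.card_le_card hS
    omega
  · calc ordAsc S' (r - 1) ≤ ordAsc S (r - 1) := ordAsc_le_ordAsc_of_le hS (by omega)
      _ ≤ ordDesc B (r - 1) := ordAsc_le_ordDesc_pred_tradeSize hr
      _ ≤ ordDesc B' (r - 1) := ordDesc_le_ordDesc_of_le hB (by omega)

lemma le_countP_le_iff {M : Multiset ℝ} {r : ℕ} {v : ℝ} (hr : r ≤ Multiset.card M) :
    r ≤ M.countP (· ≤ v) ↔ (0 < r → ordAsc M (r - 1) ≤ v) := by
  rcases r with _ | r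
  · simp
  · simpa using (ordAsc_le_iff (M := M) (v := v) hr).symm

lemma le_countP_ge_iff {M : Multiset ℝ} {r : ℕ} {v : ℝ} (hr : r ≤ Multiset.card M) :
    r ≤ M.countP (v ≤ ·) ↔ (0 < r → v ≤ ordDesc M (r - 1)) := by
  rcases r with _ | r
  · simp
  · simpa using (le_ordDesc_iff (M := M) (v := v) hr).symm

lemma tradeSize_le_countP_le_of_countP_lt {x : ℝ} (h : B.countP (x < ·) < tradeSize B S) :
    tradeSize B S ≤ S.countP (· ≤ x) := by
  have hrB := tradeSize_le_card_left B S
  refine (le_countP_le_iff (tradeSize_le_card_right B S)).mpr fun hr => ?_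
  have hx : ordDesc B (tradeSize B S - 1) ≤ x :=
    not_lt.mp fun hlt => by have := (lt_ordDesc_iff (by omega)).mp hlt; omega
  exact (ordAsc_le_ordDesc_pred_tradeSize hr).trans hx

lemma tradeSize_le_countP_ge_of_countP_lt {y : ℝ} (h : S.countP (· < y) < tradeSize B S) :
    tradeSize B S ≤ B.countP (y ≤ ·) := by
  have hrS := tradeSize_le_card_right B S
  refine (le_countP_ge_iff (tradeSize_le_card_left B S)).mpr fun hr => ?_
  have hy : y ≤ ordAsc S (tradeSize B S - 1) :=
    not_lt.mp fun hlt => by have := (ordAsc_lt_iff (by omega)).mp hlt; omega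
  exact hy.trans (ordAsc_le_ordDesc_pred_tradeSize hr)

lemma tradeSize_lt_tradeSize_cons_cons {x y : ℝ} (hxy : y ≤ x)
    (hx : tradeSize B S ≤ S.countP (· ≤ x)) (hy : tradeSize B S ≤ B.countP (y ≤ ·)) :
    tradeSize B S < tradeSize (x ::ₘ B) (y ::ₘ S) := by
  set r := tradeSize B S
  obtain ⟨v, hyv, hvx, hBv, hSv⟩ :
      ∃ v, y ≤ v ∧ v ≤ x ∧ r ≤ B.countP (v ≤ ·) ∧ r ≤ S.countP (· ≤ v) := by
    rcases Nat.eq_zero_or_pos r with hr | hr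
    · exact ⟨y, le_rfl, hxy, by omega, by omega⟩
    have hrB := tradeSize_le_card_left B S
    have hrS := tradeSize_le_card_right B S
    have hx' := (le_countP_le_iff hrS).mp hx hr
    have hy' := (le_countP_ge_iff hrB).mp hy hr
    refine ⟨max (ordAsc S (r - 1)) y, le_max_right _ _, max_le hx' hxy, ?_, ?_⟩
    · exact (le_countP_ge_iff hrB).mpr fun _ =>
        max_le (ordAsc_le_ordDesc_pred_tradeSize hr) hy'
    · exact (le_countP_le_iff hrS).mpr fun _ => le_max_left _ _
  refine lt_tradeSize_of_lt_countP (v := v) ?_ ?_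
  · rw [Multiset.countP_cons, if_pos hvx]; omega
  · rw [Multiset.countP_cons, if_pos hyv]; omega

/-- The condition of the `if` in `strGFT`: STR keeps every first-best trade. -/
def StrKeepsAllTrades (B S : Multiset ℝ) : Prop :=
  tradeSize B S = Multiset.card S ∨
    (0 < tradeSize B S ∧ ordAsc S (tradeSize B S) ≤ ordDesc B (tradeSize B S - 1))

/-- If `y` undercuts the marginal seller, it becomes the next seller `s⁽ʳ⁺¹⁾`, which the
`r`-th buyer still beats; otherwise enough buyers are left for `y` to trade. -/
lemma tradeSize_lt_or_strKeepsAllTrades_of_cons {y : ℝ} (hB : B ≤ B') (hS : y ::ₘ S ≤ S')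
    (hy : tradeSize B S < B.countP (y ≤ ·)) :
    tradeSize B S < tradeSize B' S' ∨ StrKeepsAllTrades B' S' := by
  set r := tradeSize B S
  have hrB := tradeSize_le_card_left B S
  have hrS := tradeSize_le_card_right B S
  have hSS' : S ≤ S' := (Multiset.le_cons_self S y).trans hS
  by_cases hlow : 0 < r ∧ y ≤ ordAsc S (r - 1)
  · obtain ⟨hr, hyS⟩ := hlow
    rcases (tradeSize_mono hB hSS').lt_or_eq with hlt | heq
    · exact Or.inl hlt
    refine Or.inr (Or.inr ⟨heq ▸ hr, ?_⟩)
    rw [← heq]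
    have hcount : r < S'.countP (· ≤ ordAsc S (r - 1)) := by
      have := (le_countP_le_iff hrS).mpr fun _ => le_refl (ordAsc S (r - 1))
      have := Multiset.countP_le_of_le (fun z => z ≤ ordAsc S (r - 1)) hS
      rw [Multiset.countP_cons, if_pos hyS] at this
      omega
    calc ordAsc S' r ≤ ordAsc S (r - 1) :=
          (ordAsc_le_iff (lt_card_of_lt_countP hcount)).mpr hcount
      _ ≤ ordDesc B (r - 1) := ordAsc_le_ordDesc_pred_tradeSize hr
      _ ≤ ordDesc B' (r - 1) := ordDesc_le_ordDesc_of_le hB (by omega)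
  · refine Or.inl ((lt_tradeSize_of_lt_countP hy (S := y ::ₘ S) ?_).trans_le
      (tradeSize_mono hB hS))
    have : r ≤ S.countP (· ≤ y) := (le_countP_le_iff hrS).mpr fun hr =>
      (not_le.mp fun h => hlow ⟨hr, h⟩).le
    rw [Multiset.countP_cons, if_pos le_rfl]
    omega

lemma optGFT_le_sum_of_le (hB : B ≤ B') (hS : S ≤ S') {t : ℕ} (hrt : tradeSize B S ≤ t)
    (ht : t ≤ tradeSize B' S') :
    optGFT B S ≤ ∑ i ∈ Finset.range t, (ordDesc B' i - ordAsc S' i) := by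
  calc optGFT B S ≤ ∑ i ∈ Finset.range (tradeSize B S), (ordDesc B' i - ordAsc S' i) := by
        refine Finset.sum_le_sum fun i hi => ?_
        have hi := Finset.mem_range.mp hi
        have := ordDesc_le_ordDesc_of_le hB (hi.trans_le (tradeSize_le_card_left B S))
        have := ordAsc_le_ordAsc_of_le hS (hi.trans_le (tradeSize_le_card_right B S))
        linarith
    _ ≤ ∑ i ∈ Finset.range t, (ordDesc B' i - ordAsc S' i) := by
        refine Finset.sum_le_sum_of_subset_of_nonneg (Finset.range_subset_range.mpr hrt)
          fun i hi _ => ?_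
        have := ordAsc_le_ordDesc_of_lt_tradeSize ((Finset.mem_range.mp hi).trans_le ht)
        linarith

lemma optGFT_le_strGFT (hB : B ≤ B') (hS : S ≤ S')
    (h : tradeSize B S < tradeSize B' S' ∨ StrKeepsAllTrades B' S') :
    optGFT B S ≤ strGFT B' S' := by
  rw [strGFT]
  split_ifs with hkeep
  · exact optGFT_le_sum_of_le hB hS (tradeSize_mono hB hS) le_rfl
  · have hlt : tradeSize B S < tradeSize B' S' := h.resolve_right hkeep
    exact optGFT_le_sum_of_le hB hS (by omega) (by omega)

end TradeSize

section Quantiles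

variable {N : ℕ} {f β σ : Fin N → ℝ}

lemma countP_map_apply_lt_le (hf : Antitone f) (X : Finset (Fin N)) (j : Fin N) :
    (X.val.map f).countP (f j < ·) ≤ j := by
  rw [Multiset.countP_map, ← Finset.filter_val, Finset.card_val, ← Fin.card_Iio j]
  exact Finset.card_le_card fun x hx =>
    Finset.mem_Iio.mpr (not_le.mp fun hjx => (hf hjx).not_gt (Finset.mem_filter.mp hx).2)

lemma countP_map_lt_apply_le (hf : Antitone f) (X : Finset (Fin N)) (i : Fin N) :
    (X.val.map f).countP (· < f i) ≤ N - 1 - i := by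
  rw [Multiset.countP_map, ← Finset.filter_val, Finset.card_val, ← Fin.card_Ioi i]
  exact Finset.card_le_card fun x hx =>
    Finset.mem_Ioi.mpr (not_le.mp fun hxi => (hf hxi).not_gt (Finset.mem_filter.mp hx).2)

lemma card_sub_le_countP_map_le_apply (hf : Antitone f) (X : Finset (Fin N)) (j : Fin N) :
    X.card - j ≤ (X.val.map f).countP (· ≤ f j) := by
  have := Multiset.card_eq_countP_add_countP (fun z => f j < z) (X.val.map f)
  simp only [not_lt, Multiset.card_map, Finset.card_val] at this
  have := countP_map_apply_lt_le hf X j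
  omega

lemma card_sub_le_countP_map_apply_le (hf : Antitone f) (X : Finset (Fin N)) (i : Fin N) :
    X.card - (N - 1 - i) ≤ (X.val.map f).countP (f i ≤ ·) := by
  have := Multiset.card_eq_countP_add_countP (fun z => z < f i) (X.val.map f)
  simp only [not_lt, Multiset.card_map, Finset.card_val] at this
  have := countP_map_lt_apply_le hf X i
  omega

variable (hβ : Antitone β) (hσ : Antitone σ) (hσβ : ∀ i, σ i ≤ β i)
include hβ hσ hσβ

/-- A new buyer at an early index `j` and a new seller at a late index `i` add one trade:
either they beat the marginal traders, or the market is so thin that the many old sellers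
after `j` and old buyers before `i` already make room for them. -/
lemma tradeSize_lt_tradeSize_cons_cons_of_le {Bo So : Finset (Fin N)} {i j : Fin N}
    (hji : j ≤ i) (hj : 2 * (j : ℕ) ≤ So.card) (hi : 2 * (N - 1 - i) ≤ Bo.card) :
    tradeSize (Bo.val.map β) (So.val.map σ) <
      tradeSize (β j ::ₘ Bo.val.map β) (σ i ::ₘ So.val.map σ) := by
  set r := tradeSize (Bo.val.map β) (So.val.map σ)
  have hrB : r ≤ Bo.card := by simpa using tradeSize_le_card_left (Bo.val.map β) (So.val.map σ)
  have hrS : r ≤ So.card := by simpa using tradeSize_le_card_right (Bo.val.map β) (So.val.map σ)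
  refine tradeSize_lt_tradeSize_cons_cons ((hσβ i).trans (hβ hji)) ?_ ?_
  · rcases lt_or_ge (j : ℕ) r with hjr | hrj
    · exact tradeSize_le_countP_le_of_countP_lt ((countP_map_apply_lt_le hβ Bo j).trans_lt hjr)
    · calc r ≤ So.card - j := by omega
        _ ≤ (So.val.map σ).countP (· ≤ σ j) := card_sub_le_countP_map_le_apply hσ So j
        _ ≤ (So.val.map σ).countP (· ≤ β j) := countP_mono_pred fun _ h => h.trans (hσβ j)
  · rcases lt_or_ge (N - 1 - i) r with hir | hri
    · exact tradeSize_le_countP_ge_of_countP_lt ((countP_map_lt_apply_le hσ So i).trans_lt hir)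
    · calc r ≤ Bo.card - (N - 1 - i) := by omega
        _ ≤ (Bo.val.map β).countP (β i ≤ ·) := card_sub_le_countP_map_apply_le hβ Bo i
        _ ≤ (Bo.val.map β).countP (σ i ≤ ·) := countP_mono_pred fun _ h => (hσβ i).trans h

omit hσ in
lemma tradeSize_lt_countP_map_of_late {Bo So : Finset (Fin N)} {i : Fin N}
    (hi : So.card + (N - 1 - i) < Bo.card) :
    tradeSize (Bo.val.map β) (So.val.map σ) < (Bo.val.map β).countP (σ i ≤ ·) := by
  have hrS : tradeSize (Bo.val.map β) (So.val.map σ) ≤ So.card := by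
    simpa using tradeSize_le_card_right (Bo.val.map β) (So.val.map σ)
  calc tradeSize (Bo.val.map β) (So.val.map σ) < Bo.card - (N - 1 - i) := by omega
    _ ≤ (Bo.val.map β).countP (β i ≤ ·) := card_sub_le_countP_map_apply_le hβ Bo i
    _ ≤ (Bo.val.map β).countP (σ i ≤ ·) := countP_mono_pred fun _ h => (hσβ i).trans h

end Quantiles

section Assignments

lemma map_val_le_map_val_union_left {α : Type*} [DecidableEq α] (X Y : Finset α)
    (f : α → ℝ) : X.val.map f ≤ (X ∪ Y).val.map f :=
  Multiset.map_le_map (Finset.val_le_iff.mpr Finset.subset_union_left)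

lemma cons_map_val_le_map_val_union {α : Type*} [DecidableEq α] {X Y : Finset α} {j : α}
    (hjX : j ∉ X) (hjY : j ∈ Y) (f : α → ℝ) : f j ::ₘ X.val.map f ≤ (X ∪ Y).val.map f := by
  rw [← Multiset.map_cons, ← Finset.cons_val hjX]
  exact Multiset.map_le_map (Finset.val_le_iff.mpr
    (Finset.cons_subset.mpr ⟨Finset.mem_union_right _ hjY, Finset.subset_union_left⟩))

variable {m n c : ℕ} {π : Fin (NN m n c) → Label}

@[simp]
lemma mem_labelSet {L : Label} {i : Fin (NN m n c)} : i ∈ labelSet m n c L π ↔ π i = L := by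
  simp [labelSet]

lemma exists_of_mem_E1 (h : π ∈ E1 m n c) :
    (∃ j, π j = .BN ∧ (j : ℕ) < pVal n) ∧ (∃ i, π i = .SN ∧ NN m n c - pVal n ≤ (i : ℕ)) := by
  obtain ⟨-, hBN, -, hSN, -⟩ := Finset.mem_filter.mp h
  obtain ⟨j, hj⟩ := Finset.card_pos.mp (by omega : 0 < (I1 m n c ∩ labelSet m n c .BN π).card)
  obtain ⟨i, hi⟩ := Finset.card_pos.mp (by omega : 0 < (J1 m n c ∩ labelSet m n c .SN π).card)
  simp only [Finset.mem_inter, I1, J1, Finset.mem_filter, Finset.mem_univ, true_and,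
    mem_labelSet] at hj hi
  exact ⟨⟨j, hj.2, hj.1⟩, ⟨i, hi.2, hi.1⟩⟩

end Assignments

theorem not_E2_STR_ge_OPT_general (m n c : ℕ) (hnm : n ≤ m)
    (b s : ℝ → ℝ) (hb : MonotoneOn b (Set.Ioo 0 1)) (hs : MonotoneOn s (Set.Ioo 0 1))
    (hbs : ∀ x ∈ Set.Ioo (0 : ℝ) 1, s x ≤ b x)
    (q : Fin (NN m n c) → ℝ) (hq : ∀ i, q i ∈ Set.Ioo (0 : ℝ) 1) (hqa : Antitone q) :
    ∀ π ∈ validAssignments m n c, π ∉ E2 m n c →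
      OPTq m n c q b s π ≤ STRq m n c q b s π := by
  intro π hπ hπE2
  obtain ⟨hBO, -, hSO, -⟩ := (Finset.mem_filter.mp hπ).2
  have hβ : Antitone fun i => b (q i) := fun i j hij => hb (hq j) (hq i) (hqa hij)
  have hσ : Antitone fun i => s (q i) := fun i j hij => hs (hq j) (hq i) (hqa hij)
  have hσβ : ∀ i, s (q i) ≤ b (q i) := fun i => hbs _ (hq i)
  have hN : NN m n c = m + n + 2 * c := rfl
  refine optGFT_le_strGFT (map_val_le_map_val_union_left _ _ _)
    (map_val_le_map_val_union_left _ _ _) ?_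
  by_cases hE1 : π ∈ E1 m n c
  · obtain ⟨⟨j, hjBN, hj⟩, ⟨i, hiSN, hi⟩⟩ := exists_of_mem_E1 hE1
    have hp : pVal n = (n + 9) / 10 := rfl
    have hmore := tradeSize_lt_tradeSize_cons_cons_of_le hβ hσ hσβ (i := i) (j := j)
      (Bo := labelSet m n c .BO π) (So := labelSet m n c .SO π)
      (Fin.le_iff_val_le_val.mpr (by omega)) (by omega) (by omega)
    exact Or.inl (hmore.trans_le (tradeSize_mono
      (cons_map_val_le_map_val_union (j := j) (by simp [hjBN]) (by simp [hjBN]) _)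
      (cons_map_val_le_map_val_union (j := i) (by simp [hiSN]) (by simp [hiSN]) _)))
  · obtain ⟨i, hiSN, hi⟩ : ∃ i, π i = .SN ∧ 2 * n + 2 * c ≤ (i : ℕ) := by
      by_contra! h
      exact hπE2 (Finset.mem_filter.mpr ⟨hπ, hE1, fun i hi => h i (mem_labelSet.mp hi)⟩)
    exact tradeSize_lt_or_strKeepsAllTrades_of_cons (map_val_le_map_val_union_left _ _ _)
      (cons_map_val_le_map_val_union (j := i) (by simp [hiSN]) (by simp [hiSN]) _)
      (tradeSize_lt_countP_map_of_late hβ hσβ (by omega))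

/-- Assume `m ≥ n ≥ 20`, `c ≥ 1`, and `b(q) ≥ s(q)` for all
`q ∈ (0,1)`. Fix quantiles `1 > q₁ ≥ … ≥ q_N > 0`. Then `STR(q,π) ≥ OPT(q,π)` for every
valid assignment `π` not in `E₂`. -/
theorem not_E2_STR_ge_OPT (m n c : ℕ) (hnm : n ≤ m) (hn : 20 ≤ n) (hc : 1 ≤ c)
    (b s : ℝ → ℝ) (hb : MonotoneOn b (Set.Ioo 0 1)) (hs : MonotoneOn s (Set.Ioo 0 1))
    (hbs : ∀ x ∈ Set.Ioo (0 : ℝ) 1, s x ≤ b x)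
    (q : Fin (NN m n c) → ℝ) (hq : ∀ i, q i ∈ Set.Ioo (0 : ℝ) 1) (hqa : Antitone q) :
    ∀ π ∈ validAssignments m n c, π ∉ E2 m n c →
      OPTq m n c q b s π ≤ STRq m n c q b s π :=
  not_E2_STR_ge_OPT_general m n c hnm b s hb hs hbs q hq hqa
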